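/- arXiv:2205.05704 — 8 statements merged into one kernel-verified Lean document; each statement's English description precedes it below -/
import Mathlib

section
/- Let (P, μ) be a probability space with a measure-preserving transformation T, and C_0,…,C_{n-1} measurable sets of measure 1/n each with pairwise measure-zero intersections, indices mod n. Suppose P decomposes into M ≥ 2 pairwise disjoint T-invariant sets P_1,…,P_M, and suppose each P_j completely contains at least one C_{p(j)} (with p(1) < p(2) < ⋯ < p(M)). Then the total error ε := (1/2) Σ_{k=0}^{n-1} μ(T(C_k) Δ C_{k+1}) satisfies ε ≥ M/n, where Δ denotes symmetric difference. -/
open MeasureTheory Filter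
open scoped symmDiff ENNReal

namespace Stmt1Aux

variable {P : Type*} [MeasurableSpace P] {μ : Measure P} {e : P ≃ᵐ P}

theorem meas_image (he : MeasurePreserving e μ μ) {S : Set P} (hS : MeasurableSet S) :
    μ (⇑e '' S) = μ S := by
  rw [MeasurableEquiv.image_eq_preimage_symm]
  exact (he.symm e).measure_preimage hS.nullMeasurableSet

theorem img_ae (he : MeasurePreserving e μ μ) {A : Set P} (hAm : MeasurableSet A)
    (hA : μ ((⇑e ⁻¹' A) ∆ A) = 0) : (⇑e '' A : Set P) =ᵐ[μ] A := by
  apply measure_symmDiff_eq_zero_iff.mp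
  have h1 : (⇑e '' A) ∆ A = ⇑e '' (A ∆ (⇑e ⁻¹' A)) := by
    rw [Set.image_symmDiff e.injective, Set.image_preimage_eq A e.surjective]
  rw [h1, meas_image he (hAm.symmDiff (e.measurable hAm))]
  rwa [symmDiff_comm] at hA

theorem step_inter (he : MeasurePreserving e μ μ) {A : Set P} (hAm : MeasurableSet A)
    (himg : (⇑e '' A : Set P) =ᵐ[μ] A) {X : Set P} (hXm : MeasurableSet X) (Y : Set P) :
    μ (X ∩ A) ≤ μ (Y ∩ A) + μ (((⇑e '' X) ∆ Y) ∩ A) := by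
  have h1 : μ (X ∩ A) = μ ((⇑e '' X) ∩ A) := by
    calc μ (X ∩ A) = μ (⇑e '' (X ∩ A)) := (meas_image he (hXm.inter hAm)).symm
    _ = μ ((⇑e '' X) ∩ (⇑e '' A)) := by rw [Set.image_inter e.injective]
    _ = μ ((⇑e '' X) ∩ A) := measure_congr (EventuallyEq.rfl.inter himg)
  rw [h1]
  have hsub : (⇑e '' X) ∩ A ⊆ (Y ∩ A) ∪ (((⇑e '' X) ∆ Y) ∩ A) := by
    intro x hx
    by_cases hY : x ∈ Y
    · exact Or.inl ⟨hY, hx.2⟩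
    · exact Or.inr ⟨Set.mem_symmDiff.mpr (Or.inl ⟨hx.1, hY⟩), hx.2⟩
  exact (measure_mono hsub).trans (measure_union_le _ _)

theorem step_diff (he : MeasurePreserving e μ μ) {A : Set P} (hAm : MeasurableSet A)
    (himg : (⇑e '' A : Set P) =ᵐ[μ] A) {X : Set P} (hXm : MeasurableSet X) (Y : Set P) :
    μ (Y \ A) ≤ μ (X \ A) + μ (((⇑e '' X) ∆ Y) \ A) := by
  have h1 : μ ((⇑e '' X) \ A) = μ (X \ A) := by
    calc μ ((⇑e '' X) \ A) = μ ((⇑e '' X) \ (⇑e '' A)) :=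
          (measure_congr (EventuallyEq.rfl.diff himg)).symm
    _ = μ (⇑e '' (X \ A)) := by rw [Set.image_diff e.injective]
    _ = μ (X \ A) := meas_image he (hXm.diff hAm)
  have hsub : Y \ A ⊆ ((⇑e '' X) \ A) ∪ (((⇑e '' X) ∆ Y) \ A) := by
    intro x hx
    by_cases hX : x ∈ ⇑e '' X
    · exact Or.inl ⟨hX, hx.2⟩
    · exact Or.inr ⟨Set.mem_symmDiff.mpr (Or.inr ⟨hx.1, hX⟩), hx.2⟩
  calc μ (Y \ A) ≤ μ ((⇑e '' X) \ A) + μ (((⇑e '' X) ∆ Y) \ A) :=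
        (measure_mono hsub).trans (measure_union_le _ _)
  _ = μ (X \ A) + μ (((⇑e '' X) ∆ Y) \ A) := by rw [h1]

theorem sum_shift_cast (n a : ℕ) [NeZero n] (f : ZMod n → ℝ≥0∞) :
    ∑ i ∈ Finset.range n, f ((a + i : ℕ)) = ∑ k : ZMod n, f k := by
  rw [Finset.sum_bij (fun i _ => ((a + i : ℕ) : ZMod n))]
  · exact fun _ _ => Finset.mem_univ _
  · intro i hi j hj hij
    simp only [Finset.mem_range] at hi hj
    have h2 : (a + i) % n = (a + j) % n := (ZMod.natCast_eq_natCast_iff' _ _ _).mp hij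
    have h3 : i % n = j % n := Nat.ModEq.add_left_cancel' a h2
    rwa [Nat.mod_eq_of_lt hi, Nat.mod_eq_of_lt hj] at h3
  · intro k _
    refine ⟨(k - a).val, ?_, ?_⟩
    · simpa using ZMod.val_lt _
    · simp
  · intro i _; rfl

end Stmt1Aux

open Stmt1Aux

/-- If the phase space decomposes into `M ≥ 2` disjoint invariant sets, each containing
an element of an `n`-element cyclic permutation, then the total error of the cyclic
permutation is at least `M/n`. -/
theorem stmt1 {P : Type*} [MeasurableSpace P] (μ : Measure P) [IsProbabilityMeasure μ]
    (e : P ≃ᵐ P) (he : MeasurePreserving e μ μ)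
    (n : ℕ) [NeZero n] (C : ZMod n → Set P)
    (hCmeas : ∀ k, MeasurableSet (C k))
    (hCmeasure : ∀ k, μ (C k) = 1 / n)
    (hCdisj : ∀ i j, i ≠ j → μ (C i ∩ C j) = 0)
    (M : ℕ) (hM : 2 ≤ M) (Pj : Fin M → Set P)
    (hPmeas : ∀ j, MeasurableSet (Pj j))
    (hPdisj : ∀ i j, i ≠ j → Disjoint (Pj i) (Pj j))
    (hPcover : (⋃ j, Pj j) = Set.univ)
    (hPinv : ∀ j, μ ((⇑e ⁻¹' Pj j) ∆ Pj j) = 0)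
    (p : Fin M → Fin n) (hp : StrictMono p)
    (hsub : ∀ j, C ((p j : ℕ) : ZMod n) ⊆ Pj j) :
    (M : ℝ≥0∞) / n ≤ 2⁻¹ * ∑ k : ZMod n, μ ((⇑e '' C k) ∆ C (k + 1)) := by
  have hM0 : 0 < M := by omega
  -- chain lemmas
  have chain1 : ∀ (A : Set P), MeasurableSet A → ((⇑e '' A : Set P) =ᵐ[μ] A) → ∀ (a t : ℕ),
      μ (C a ∩ A) ≤ μ (C ((a + t : ℕ)) ∩ A)
        + ∑ i ∈ Finset.range t, μ (((⇑e '' C ((a + i : ℕ))) ∆ C (((a + i : ℕ) : ZMod n) + 1)) ∩ A) := by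
    intro A hAm himg a t
    induction t with
    | zero => simp
    | succ t ih =>
      rw [Finset.sum_range_succ]
      have hcast : (((a + (t + 1) : ℕ)) : ZMod n) = ((a + t : ℕ) : ZMod n) + 1 := by push_cast; ring
      have h := step_inter he hAm himg (hCmeas ((a + t : ℕ))) (C (((a + t : ℕ) : ZMod n) + 1))
      calc μ (C a ∩ A) ≤ μ (C ((a + t : ℕ)) ∩ A)
            + ∑ i ∈ Finset.range t, μ (((⇑e '' C ((a + i : ℕ))) ∆ C (((a + i : ℕ) : ZMod n) + 1)) ∩ A) := ih
      _ ≤ (μ (C (((a + t : ℕ) : ZMod n) + 1) ∩ A)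
            + μ (((⇑e '' C ((a + t : ℕ))) ∆ C (((a + t : ℕ) : ZMod n) + 1)) ∩ A))
            + ∑ i ∈ Finset.range t, μ (((⇑e '' C ((a + i : ℕ))) ∆ C (((a + i : ℕ) : ZMod n) + 1)) ∩ A) :=
          add_le_add_left h _
      _ = μ (C ((a + (t + 1) : ℕ)) ∩ A)
            + (∑ i ∈ Finset.range t, μ (((⇑e '' C ((a + i : ℕ))) ∆ C (((a + i : ℕ) : ZMod n) + 1)) ∩ A)
            + μ (((⇑e '' C ((a + t : ℕ))) ∆ C (((a + t : ℕ) : ZMod n) + 1)) ∩ A)) := by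
          rw [hcast]; ring
  have chain2 : ∀ (A : Set P), MeasurableSet A → ((⇑e '' A : Set P) =ᵐ[μ] A) → ∀ (a t : ℕ),
      μ (C ((a + t : ℕ)) \ A) ≤ μ (C a \ A)
        + ∑ i ∈ Finset.range t, μ (((⇑e '' C ((a + i : ℕ))) ∆ C (((a + i : ℕ) : ZMod n) + 1)) \ A) := by
    intro A hAm himg a t
    induction t with
    | zero => simp
    | succ t ih =>
      rw [Finset.sum_range_succ]
      have hcast : (((a + (t + 1) : ℕ)) : ZMod n) = ((a + t : ℕ) : ZMod n) + 1 := by push_cast; ring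
      have h := step_diff he hAm himg (hCmeas ((a + t : ℕ))) (C (((a + t : ℕ) : ZMod n) + 1))
      calc μ (C ((a + (t + 1) : ℕ)) \ A) = μ (C (((a + t : ℕ) : ZMod n) + 1) \ A) := by rw [hcast]
      _ ≤ μ (C ((a + t : ℕ)) \ A)
            + μ (((⇑e '' C ((a + t : ℕ))) ∆ C (((a + t : ℕ) : ZMod n) + 1)) \ A) := h
      _ ≤ (μ (C a \ A)
            + ∑ i ∈ Finset.range t, μ (((⇑e '' C ((a + i : ℕ))) ∆ C (((a + i : ℕ) : ZMod n) + 1)) \ A))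
            + μ (((⇑e '' C ((a + t : ℕ))) ∆ C (((a + t : ℕ) : ZMod n) + 1)) \ A) :=
          add_le_add_left ih _
      _ = _ := by ring
  -- the partition points
  set r : ℕ → ℕ := fun j => if h : j < M then (p ⟨j, h⟩ : ℕ) else (p ⟨0, hM0⟩ : ℕ) + n with hr
  have hr_lt : ∀ ⦃j k : ℕ⦄, j < k → k ≤ M → r j < r k := by
    intro j k hjk hkM
    by_cases hk : k < M
    · have hj : j < M := lt_trans hjk hk
      simp only [hr, dif_pos hj, dif_pos hk]
      exact hp (show (⟨j, hj⟩ : Fin M) < ⟨k, hk⟩ from hjk)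
    · have hj : j < M := by omega
      simp only [hr, dif_pos hj, dif_neg hk]
      calc (p ⟨j, hj⟩ : ℕ) < n := (p ⟨j, hj⟩).isLt
      _ ≤ (p ⟨0, hM0⟩ : ℕ) + n := Nat.le_add_left _ _
  have hr_le : ∀ ⦃j k : ℕ⦄, j ≤ k → k ≤ M → r j ≤ r k := by
    intro j k hjk hkM
    rcases eq_or_lt_of_le hjk with h | h
    · rw [h]
    · exact (hr_lt h hkM).le
  set F : ℕ → ℝ≥0∞ := fun m => μ ((⇑e '' C (m : ZMod n)) ∆ C ((m : ZMod n) + 1)) with hF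
  -- block bound
  have hblock : ∀ j (hj : j < M),
      1 / (n : ℝ≥0∞) + 1 / n ≤ ∑ i ∈ Finset.range (r (j + 1) - r j), F (r j + i) := by
    intro j hj
    set jj : Fin M := ⟨j, hj⟩ with hjj
    set nx : Fin M := if h : j + 1 < M then ⟨j + 1, h⟩ else ⟨0, hM0⟩ with hnx
    have hnxval : (nx : ℕ) = if j + 1 < M then j + 1 else 0 := by
      rcases lt_or_ge (j + 1) M with h | h
      · simp only [hnx, dif_pos h, if_pos h]
      · simp only [hnx, dif_neg (not_lt.mpr h), if_neg (not_lt.mpr h)]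
    have hne : jj ≠ nx := by
      intro hcon
      have hval : j = (nx : ℕ) := congrArg Fin.val hcon
      rw [hnxval] at hval
      rcases lt_or_ge (j + 1) M with h | h
      · rw [if_pos h] at hval; omega
      · rw [if_neg (not_lt.mpr h)] at hval; omega
    have hrj : r j = (p jj : ℕ) := dif_pos hj
    have hcast2 : ((r (j + 1) : ℕ) : ZMod n) = ((p nx : ℕ) : ZMod n) := by
      rcases lt_or_ge (j + 1) M with h | h
      · simp only [hr, dif_pos h, hnx]
      · have : r (j + 1) = (p ⟨0, hM0⟩ : ℕ) + n := dif_neg (not_lt.mpr h)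
        simp only [this, hnx, dif_neg (not_lt.mpr h)]
        push_cast [ZMod.natCast_self]
        ring
    have hle : r j ≤ r (j + 1) := hr_le (by omega) (by omega)
    have hsum : r j + (r (j + 1) - r j) = r (j + 1) := by omega
    set t := r (j + 1) - r j with ht
    have hcastend : (((r j + t : ℕ)) : ZMod n) = ((p nx : ℕ) : ZMod n) := by
      rw [hsum]; exact hcast2
    set A := Pj jj with hA
    have hAm : MeasurableSet A := hPmeas jj
    have himg : (⇑e '' A : Set P) =ᵐ[μ] A := img_ae he hAm (hPinv jj)
    have hCa : C ((r j : ℕ)) ⊆ A := by rw [hrj]; exact hsub jj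
    have hCbA : Disjoint (C ((r j + t : ℕ))) A := by
      rw [hcastend]
      exact Set.disjoint_of_subset_left (hsub nx) (hPdisj nx jj (Ne.symm hne))
    have h1 : μ (C ((r j : ℕ)) ∩ A) = 1 / n := by
      rw [Set.inter_eq_left.mpr hCa, hCmeasure]
    have h2 : μ (C ((r j + t : ℕ)) ∩ A) = 0 := by
      rw [Set.disjoint_iff_inter_eq_empty.mp hCbA, measure_empty]
    have h3 : μ (C ((r j + t : ℕ)) \ A) = 1 / n := by
      rw [hCbA.sdiff_eq_left, hCmeasure]
    have h4 : μ (C ((r j : ℕ)) \ A) = 0 := by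
      rw [Set.diff_eq_empty.mpr hCa, measure_empty]
    have hc1 := chain1 A hAm himg (r j) t
    have hc2 := chain2 A hAm himg (r j) t
    rw [h1, h2, zero_add] at hc1
    rw [h3, h4, zero_add] at hc2
    calc (1 : ℝ≥0∞) / n + 1 / n
        ≤ (∑ i ∈ Finset.range t, μ (((⇑e '' C ((r j + i : ℕ))) ∆ C (((r j + i : ℕ) : ZMod n) + 1)) ∩ A))
          + ∑ i ∈ Finset.range t, μ (((⇑e '' C ((r j + i : ℕ))) ∆ C (((r j + i : ℕ) : ZMod n) + 1)) \ A) :=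
        add_le_add hc1 hc2
    _ = ∑ i ∈ Finset.range t, (μ (((⇑e '' C ((r j + i : ℕ))) ∆ C (((r j + i : ℕ) : ZMod n) + 1)) ∩ A)
          + μ (((⇑e '' C ((r j + i : ℕ))) ∆ C (((r j + i : ℕ) : ZMod n) + 1)) \ A)) :=
        (Finset.sum_add_distrib).symm
    _ = ∑ i ∈ Finset.range t, F (r j + i) := by
        refine Finset.sum_congr rfl fun i _ => ?_
        exact measure_inter_add_diff _ hAm
  -- summing the blocks
  have hpart : ∀ J, J ≤ M → ∑ j ∈ Finset.range J, (∑ m ∈ Finset.Ico (r j) (r (j + 1)), F m)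
      = ∑ m ∈ Finset.Ico (r 0) (r J), F m := by
    intro J
    induction J with
    | zero => simp
    | succ J ih =>
      intro hJ
      rw [Finset.sum_range_succ, ih (by omega),
        Finset.sum_Ico_consecutive _ (hr_le (Nat.zero_le J) (by omega)) (hr_le (by omega) hJ)]
  have htot : ∑ m ∈ Finset.Ico (r 0) (r M), F m = ∑ k : ZMod n, μ ((⇑e '' C k) ∆ C (k + 1)) := by
    have h0 : r 0 = (p ⟨0, hM0⟩ : ℕ) := dif_pos hM0
    have hMv : r M = r 0 + n := by
      rw [h0]; exact dif_neg (lt_irrefl M)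
    rw [hMv, Finset.sum_Ico_eq_sum_range]
    simp only [Nat.add_sub_cancel_left]
    exact sum_shift_cast n (r 0) (fun k => μ ((⇑e '' C k) ∆ C (k + 1)))
  have hmain : (M : ℝ≥0∞) * (1 / n + 1 / n) ≤ ∑ k : ZMod n, μ ((⇑e '' C k) ∆ C (k + 1)) := by
    rw [← htot, ← hpart M le_rfl]
    calc (M : ℝ≥0∞) * (1 / n + 1 / n) = ∑ _j ∈ Finset.range M, ((1 : ℝ≥0∞) / n + 1 / n) := by
          rw [Finset.sum_const, Finset.card_range, nsmul_eq_mul]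
    _ ≤ ∑ j ∈ Finset.range M, (∑ m ∈ Finset.Ico (r j) (r (j + 1)), F m) := by
          refine Finset.sum_le_sum fun j hj => ?_
          have hj' : j < M := Finset.mem_range.mp hj
          rw [Finset.sum_Ico_eq_sum_range]
          exact hblock j hj'
  have hrw : (M : ℝ≥0∞) * (1 / n + 1 / n) = 2 * ((M : ℝ≥0∞) / n) := by
    simp only [div_eq_mul_inv, one_mul]
    ring
  rw [hrw] at hmain
  calc (M : ℝ≥0∞) / n = 2⁻¹ * (2 * ((M : ℝ≥0∞) / n)) := by
        rw [← mul_assoc, ENNReal.inv_mul_cancel (by norm_num) (by norm_num), one_mul]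
  _ ≤ 2⁻¹ * ∑ k : ZMod n, μ ((⇑e '' C k) ∆ C (k + 1)) := mul_le_mul_right hmain _
end

section
/- Let (P, μ) be a probability space with a measure-preserving transformation T, and C_0,…,C_{n-1} measurable sets of measure 1/n each with pairwise measure-zero intersections, indices mod n. If μ(T^n(C_k) ∩ C_k) = 0 for some k, then (1/2) Σ_{j=0}^{n-1} μ(T(C_j) Δ C_{j+1}) ≥ 1/n. -/
open MeasureTheory
open scoped symmDiff ENNReal

/-- Cyclic aperiodicity bound: if some element of an `n`-element cyclic permutation does
not return to itself (in measure) after `n` steps, then the total error is at least `1/n`. -/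
theorem stmt2 {P : Type*} [MeasurableSpace P] (μ : Measure P) [IsProbabilityMeasure μ]
    (e : P ≃ᵐ P) (he : MeasurePreserving e μ μ)
    (n : ℕ) [NeZero n] (C : ZMod n → Set P)
    (hCmeas : ∀ k, MeasurableSet (C k))
    (hCmeasure : ∀ k, μ (C k) = 1 / n)
    (hCdisj : ∀ i j, i ≠ j → μ (C i ∩ C j) = 0)
    (k : ZMod n) (hk : μ ((⇑e)^[n] '' C k ∩ C k) = 0) :
    (1 : ℝ≥0∞) / n ≤ 2⁻¹ * ∑ j : ZMod n, μ ((⇑e '' C j) ∆ C (j + 1)) := by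
  -- measure of image under e equals measure
  have himg : ∀ S : Set P, μ (⇑e '' S) = μ S := by
    intro S
    rw [MeasurableEquiv.image_eq_preimage_symm]
    exact (he.symm e).measure_preimage_equiv S
  -- image under e of a measurable set is measurable
  have hmeasimg : ∀ S : Set P, MeasurableSet S → MeasurableSet (⇑e '' S) := by
    intro S hS
    rw [MeasurableEquiv.image_eq_preimage_symm]
    exact e.symm.measurable hS
  have hmeas_iter : ∀ (m : ℕ) (S : Set P), MeasurableSet S →
      MeasurableSet ((⇑e)^[m] '' S) := by
    intro m S hS
    induction m with
    | zero => simpa using hS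
    | succ m ih =>
      rw [Function.iterate_succ', Set.image_comp]
      exact hmeasimg _ ih
  -- key telescoping estimate
  have key : ∀ m : ℕ, μ (((⇑e)^[m] '' C k) ∆ C (k + m)) ≤
      ∑ j ∈ Finset.range m, μ ((⇑e '' C (k + j)) ∆ C (k + j + 1)) := by
    intro m
    induction m with
    | zero => simp
    | succ m ih =>
      rw [Function.iterate_succ', Set.image_comp]
      calc μ ((⇑e '' ((⇑e)^[m] '' C k)) ∆ C (k + (m + 1 : ℕ)))
          ≤ μ ((⇑e '' ((⇑e)^[m] '' C k)) ∆ (⇑e '' C (k + m)))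
            + μ ((⇑e '' C (k + m)) ∆ C (k + (m + 1 : ℕ))) :=
            measure_symmDiff_le _ _ _
        _ = μ (((⇑e)^[m] '' C k) ∆ C (k + m))
            + μ ((⇑e '' C (k + m)) ∆ C (k + m + 1)) := by
            rw [← Set.image_symmDiff e.injective, himg]
            congr 2
            push_cast
            ring
        _ ≤ ∑ j ∈ Finset.range (m + 1), μ ((⇑e '' C (k + j)) ∆ C (k + j + 1)) := by
            rw [Finset.sum_range_succ]
            exact add_le_add_left ih _
  have hkey : μ (((⇑e)^[n] '' C k) ∆ C k) ≤
      ∑ j ∈ Finset.range n, μ ((⇑e '' C (k + j)) ∆ C (k + j + 1)) := by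
    have := key n
    rwa [ZMod.natCast_self, add_zero] at this
  -- the symmetric difference has measure ≥ 2/n
  have hA : μ ((⇑e)^[n] '' C k) = 1 / n := by
    have : ∀ m : ℕ, μ ((⇑e)^[m] '' C k) = 1 / n := by
      intro m
      induction m with
      | zero => simpa using hCmeasure k
      | succ m ih => rw [Function.iterate_succ', Set.image_comp, himg]; exact ih
    exact this n
  have hAmeas : MeasurableSet ((⇑e)^[n] '' C k) := hmeas_iter n _ (hCmeas k)
  have hlow : (2 : ℝ≥0∞) / n ≤ μ (((⇑e)^[n] '' C k) ∆ C k) := by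
    set A := (⇑e)^[n] '' C k
    set B := C k
    have hd : μ (A ∆ B) = μ (A \ B) + μ (B \ A) :=
      measure_symmDiff_eq hAmeas.nullMeasurableSet (hCmeas k).nullMeasurableSet
    have h1 : μ A ≤ μ (A \ B) := by
      have := measure_inter_add_diff (μ := μ) A (hCmeas k)
      rw [hk] at this
      rw [← this, zero_add]
    have h2 : μ B ≤ μ (B \ A) := by
      have := measure_inter_add_diff (μ := μ) B hAmeas
      rw [Set.inter_comm, hk] at this
      rw [← this, zero_add]
    calc (2 : ℝ≥0∞) / n = 1 / n + 1 / n := by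
          rw [← ENNReal.add_div]; norm_num
      _ = μ A + μ B := by rw [hA, hCmeasure k]
      _ ≤ μ (A \ B) + μ (B \ A) := add_le_add h1 h2
      _ = μ (A ∆ B) := hd.symm
  -- reindex the sum
  have hsum : ∑ j ∈ Finset.range n, μ ((⇑e '' C (k + j)) ∆ C (k + j + 1)) =
      ∑ j : ZMod n, μ ((⇑e '' C j) ∆ C (j + 1)) := by
    have h1 : ∑ j ∈ Finset.range n, μ ((⇑e '' C (k + j)) ∆ C (k + j + 1)) =
        ∑ j : ZMod n, μ ((⇑e '' C (k + j)) ∆ C (k + j + 1)) := by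
      refine Finset.sum_nbij' (fun i => (i : ZMod n)) (fun j => j.val) ?_ ?_ ?_ ?_ ?_
      · intro a _; exact Finset.mem_univ _
      · intro a _; exact Finset.mem_range.mpr (ZMod.val_lt a)
      · intro a ha; exact ZMod.val_cast_of_lt (Finset.mem_range.mp ha)
      · intro a _; exact ZMod.natCast_rightInverse a
      · intro a _; rfl
    rw [h1]
    exact Fintype.sum_equiv (Equiv.addLeft k) _ _ (fun j => rfl)
  have := hkey.trans (le_of_eq hsum)
  have h2 : (2 : ℝ≥0∞) / n ≤ ∑ j : ZMod n, μ ((⇑e '' C j) ∆ C (j + 1)) :=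
    hlow.trans this
  calc (1 : ℝ≥0∞) / n = 2⁻¹ * (2 / n) := by
        rw [← mul_div_assoc, ENNReal.inv_mul_cancel two_ne_zero ENNReal.ofNat_ne_top]
    _ ≤ 2⁻¹ * ∑ j : ZMod n, μ ((⇑e '' C j) ∆ C (j + 1)) :=
        mul_le_mul_right h2 _
end

section
/- Let U be a unitary operator on a d-dimensional Hilbert space, and let (|C_k⟩)_{k∈Z_d} be an orthonormal basis. Define z_k(p) = |⟨C_{k+p}| U^p |C_k⟩| (indices mod d) and θ_k(p) = arccos(z_k(p)) ∈ [0, π/2]. Then for all k and p ≥ 0: |θ_k(p) − θ_{k+p}(1)| ≤ θ_k(p+1) ≤ min{θ_k(p) + θ_{k+p}(1), π/2}. -/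
open scoped ComplexConjugate

lemma arccos_antitone : Antitone Real.arccos := fun x y h => by
  simp only [Real.arccos_eq_pi_div_two_sub_arcsin]
  exact sub_le_sub_left (Real.monotone_arcsin h) _

section Angle

variable {H : Type*} [NormedAddCommGroup H] [InnerProductSpace ℂ H]

lemma proj_norm_sq (b x : H) (hb : ‖b‖ = 1) (hx : ‖x‖ = 1) :
    ‖x - (inner ℂ b x : ℂ) • b‖ ^ 2 = 1 - ‖(inner ℂ b x : ℂ)‖ ^ 2 := by
  have h2 : (inner ℂ x ((inner ℂ b x : ℂ) • b) : ℂ) = ((‖(inner ℂ b x : ℂ)‖ ^ 2 : ℝ) : ℂ) := by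
    rw [inner_smul_right, ← inner_conj_symm x b, RCLike.mul_conj]
    norm_cast
  rw [@norm_sub_sq ℂ, h2, norm_smul, hb, hx]
  have h3 : RCLike.re (((‖(inner ℂ b x : ℂ)‖ ^ 2 : ℝ) : ℂ)) = ‖(inner ℂ b x : ℂ)‖ ^ 2 :=
    RCLike.ofReal_re _
  rw [h3]
  ring

lemma angle_triangle (a b c : H) (ha : ‖a‖ = 1) (hb : ‖b‖ = 1) (hc : ‖c‖ = 1) :
    Real.arccos ‖(inner ℂ a c : ℂ)‖ ≤
      Real.arccos ‖(inner ℂ a b : ℂ)‖ + Real.arccos ‖(inner ℂ b c : ℂ)‖ := by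
  set α := ‖(inner ℂ a b : ℂ)‖ with hαdef
  set β := ‖(inner ℂ b c : ℂ)‖ with hβdef
  set γ := ‖(inner ℂ a c : ℂ)‖ with hγdef
  have hα0 : 0 ≤ α := norm_nonneg _
  have hβ0 : 0 ≤ β := norm_nonneg _
  have hγ0 : 0 ≤ γ := norm_nonneg _
  have hα1 : α ≤ 1 := by
    have := norm_inner_le_norm (𝕜 := ℂ) a b; rwa [ha, hb, one_mul] at this
  have hβ1 : β ≤ 1 := by
    have := norm_inner_le_norm (𝕜 := ℂ) b c; rwa [hb, hc, one_mul] at this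
  by_cases hs : Real.pi / 2 ≤ Real.arccos α + Real.arccos β
  · exact le_trans (Real.arccos_le_pi_div_two.2 hγ0) hs
  · push_neg at hs
    -- key inequality
    set a' := a - (inner ℂ b a : ℂ) • b with ha'
    set c' := c - (inner ℂ b c : ℂ) • b with hc'
    have hsplit : (inner ℂ a c : ℂ) = inner ℂ a b * inner ℂ b c + inner ℂ a' c' := by
      rw [ha', hc']
      simp only [inner_sub_left, inner_sub_right, inner_smul_left, inner_smul_right,
        inner_conj_symm]
      have hbb : (inner ℂ b b : ℂ) = 1 := by
        rw [inner_self_eq_norm_sq_to_K, hb]; norm_num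
      rw [hbb]
      ring
    have hna : ‖a'‖ ^ 2 = 1 - α ^ 2 := by
      have := proj_norm_sq b a hb ha
      rwa [norm_inner_symm, ← hαdef] at this
    have hnc : ‖c'‖ ^ 2 = 1 - β ^ 2 := by
      exact proj_norm_sq b c hb hc
    have hna' : ‖a'‖ = Real.sqrt (1 - α ^ 2) := by
      rw [← hna]; exact (Real.sqrt_sq (norm_nonneg _)).symm
    have hnc' : ‖c'‖ = Real.sqrt (1 - β ^ 2) := by
      rw [← hnc]; exact (Real.sqrt_sq (norm_nonneg _)).symm
    have hkey : α * β - Real.sqrt (1 - α ^ 2) * Real.sqrt (1 - β ^ 2) ≤ γ := by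
      have h1 : ‖(inner ℂ a b * inner ℂ b c : ℂ)‖ ≤ γ + ‖(inner ℂ a' c' : ℂ)‖ := by
        have : (inner ℂ a b * inner ℂ b c : ℂ) = inner ℂ a c - inner ℂ a' c' := by
          rw [hsplit]; ring
        rw [this]
        exact norm_sub_le _ _
      have h2 : ‖(inner ℂ a' c' : ℂ)‖ ≤ Real.sqrt (1 - α ^ 2) * Real.sqrt (1 - β ^ 2) := by
        rw [← hna', ← hnc']
        exact norm_inner_le_norm (𝕜 := ℂ) a' c'
      have h3 : ‖(inner ℂ a b * inner ℂ b c : ℂ)‖ = α * β := norm_mul _ _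
      linarith
    -- conclude
    have hsum0 : 0 ≤ Real.arccos α + Real.arccos β :=
      add_nonneg (Real.arccos_nonneg _) (Real.arccos_nonneg _)
    have hcos : Real.cos (Real.arccos α + Real.arccos β)
        = α * β - Real.sqrt (1 - α ^ 2) * Real.sqrt (1 - β ^ 2) := by
      rw [Real.cos_add, Real.cos_arccos (by linarith) hα1, Real.cos_arccos (by linarith) hβ1,
        Real.sin_arccos, Real.sin_arccos]
    calc Real.arccos γ ≤ Real.arccos (Real.cos (Real.arccos α + Real.arccos β)) := by
          apply arccos_antitone
          rw [hcos]; exact hkey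
      _ = Real.arccos α + Real.arccos β :=
          Real.arccos_cos hsum0 (by linarith [Real.pi_pos, hs.le])

end Angle

/-- One-step bounds on the decay of persistence amplitudes of a quantum cyclic
permutation, in terms of the angles `θ_k(p) = arccos z_k(p)`. -/
theorem stmt4 {H : Type*} [NormedAddCommGroup H] [InnerProductSpace ℂ H]
    (d : ℕ) [NeZero d] (C : OrthonormalBasis (ZMod d) ℂ H)
    (U : H →ₗ[ℂ] H) (hU : ∀ x y : H, (inner ℂ (U x) (U y) : ℂ) = inner ℂ x y)
    (z : ZMod d → ℕ → ℝ)
    (hz : ∀ k p, z k p = ‖(inner ℂ (C (k + p)) ((U ^ p) (C k)) : ℂ)‖)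
    (θ : ZMod d → ℕ → ℝ) (hθ : ∀ k p, θ k p = Real.arccos (z k p)) :
    ∀ (k : ZMod d) (p : ℕ),
      |θ k p - θ (k + p) 1| ≤ θ k (p + 1) ∧
      θ k (p + 1) ≤ min (θ k p + θ (k + p) 1) (Real.pi / 2) := by
  have hUnorm : ∀ x : H, ‖U x‖ = ‖x‖ := by
    intro x
    have h := hU x x
    rw [inner_self_eq_norm_sq_to_K, inner_self_eq_norm_sq_to_K] at h
    have h' : (‖U x‖ : ℝ) ^ 2 = ‖x‖ ^ 2 := by exact_mod_cast h
    rw [← Real.sqrt_sq (norm_nonneg (U x)), h', Real.sqrt_sq (norm_nonneg x)]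
  have hUpow : ∀ (p : ℕ) (x : H), ‖(U ^ p) x‖ = ‖x‖ := by
    intro p
    induction p with
    | zero => intro x; simp
    | succ n ih =>
        intro x
        rw [pow_succ]
        simp only [Module.End.mul_apply]
        rw [ih (U x), hUnorm]
  have hCnorm : ∀ i : ZMod d, ‖C i‖ = 1 := fun i => C.orthonormal.1 i
  intro k p
  -- the three vectors
  set a : H := C (k + (p : ZMod d) + 1) with hadef
  set b : H := U (C (k + (p : ZMod d))) with hbdef
  set c : H := U ((U ^ p) (C k)) with hcdef
  have hna : ‖a‖ = 1 := hCnorm _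
  have hnb : ‖b‖ = 1 := by rw [hbdef, hUnorm]; exact hCnorm _
  have hnc : ‖c‖ = 1 := by rw [hcdef, hUnorm, hUpow]; exact hCnorm _
  -- identify the angles
  have hab : θ (k + p) 1 = Real.arccos ‖(inner ℂ a b : ℂ)‖ := by
    rw [hθ, hz]
    have e1 : ((k + (p : ZMod d)) + ((1 : ℕ) : ZMod d)) = k + (p : ZMod d) + 1 := by
      norm_num
    have e2 : (U ^ 1) (C (k + (p : ZMod d))) = b := by rw [pow_one]
    rw [e1, e2, hadef]
  have hbc : θ k p = Real.arccos ‖(inner ℂ b c : ℂ)‖ := by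
    rw [hθ, hz, hbdef, hcdef, hU]
  have hac : θ k (p + 1) = Real.arccos ‖(inner ℂ a c : ℂ)‖ := by
    rw [hθ, hz]
    have e1 : (k + ((p + 1 : ℕ) : ZMod d)) = k + (p : ZMod d) + 1 := by
      push_cast; ring
    have e2 : (U ^ (p + 1)) (C k) = c := by
      rw [hcdef, pow_succ']; exact Module.End.mul_apply U (U ^ p) (C k)
    rw [e1, e2, hadef]
  have hsymm : ∀ x y : H, ‖(inner ℂ x y : ℂ)‖ = ‖(inner ℂ y x : ℂ)‖ := fun x y =>
    norm_inner_symm x y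
  have T1 : Real.arccos ‖(inner ℂ a c : ℂ)‖ ≤
      Real.arccos ‖(inner ℂ a b : ℂ)‖ + Real.arccos ‖(inner ℂ b c : ℂ)‖ :=
    angle_triangle a b c hna hnb hnc
  have T2 : Real.arccos ‖(inner ℂ b c : ℂ)‖ ≤
      Real.arccos ‖(inner ℂ b a : ℂ)‖ + Real.arccos ‖(inner ℂ a c : ℂ)‖ :=
    angle_triangle b a c hnb hna hnc
  have T3 : Real.arccos ‖(inner ℂ a b : ℂ)‖ ≤
      Real.arccos ‖(inner ℂ a c : ℂ)‖ + Real.arccos ‖(inner ℂ c b : ℂ)‖ :=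
    angle_triangle a c b hna hnc hnb
  rw [hsymm b a] at T2
  rw [hsymm c b] at T3
  constructor
  · rw [abs_sub_le_iff]
    constructor
    · rw [hab, hbc, hac]; linarith
    · rw [hab, hbc, hac]; linarith
  · refine le_min ?_ ?_
    · rw [hab, hbc, hac]; linarith
    · rw [hac]
      exact Real.arccos_le_pi_div_two.2 (norm_nonneg _)
end

section
/- Let (λ̄_j)_{j=1}^{N} be real numbers with λ̄_j ∈ (0, 1] for each j, and let P = Σ_j λ̄_j². Then Σ_j λ̄_j ≥ ⌊P⌋ + sqrt(P − ⌊P⌋), where ⌊P⌋ is the floor of P. -/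
/-- Superadditivity step: `g(s) + x² ≤ g(s+x)` for `x ∈ [0,1]`,
where `g s = ⌊s⌋ + (s - ⌊s⌋)²`. -/
lemma gstep (s x : ℝ) (hx0 : 0 ≤ x) (hx1 : x ≤ 1) :
    (⌊s⌋ : ℝ) + (s - ⌊s⌋) ^ 2 + x ^ 2 ≤ (⌊s + x⌋ : ℝ) + (s + x - ⌊s + x⌋) ^ 2 := by
  have h1 : ⌊s⌋ ≤ ⌊s + x⌋ := Int.floor_le_floor (by linarith)
  have h2 : ⌊s + x⌋ ≤ ⌊s⌋ + 1 := by
    have := Int.floor_le_floor (R := ℝ) (show s + x ≤ s + 1 by linarith)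
    simpa [Int.floor_add_one] using this
  rcases eq_or_lt_of_le h1 with h | h
  · rw [← h]; nlinarith [Int.floor_le s, mul_nonneg hx0 (by linarith [Int.floor_le s] : (0:ℝ) ≤ s - ⌊s⌋)]
  · have hf : ⌊s + x⌋ = ⌊s⌋ + 1 := le_antisymm h2 h
    have ht1 : s - ⌊s⌋ < 1 := by
      have := Int.lt_floor_add_one s; push_cast; linarith
    have ht0 : (⌊s⌋ : ℝ) + 1 ≤ s + x := by
      have := Int.floor_le (s + x); rw [hf] at this; push_cast at this; linarith
    rw [hf]; push_cast
    nlinarith [mul_nonneg (by linarith : (0:ℝ) ≤ 1 - (s - ⌊s⌋)) (by linarith : (0:ℝ) ≤ 1 - x)]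

/-- For reals `λ̄_j ∈ (0,1]` with `P = Σ λ̄_j²`, one has `Σ λ̄_j ≥ ⌊P⌋ + √(P − ⌊P⌋)`. -/
theorem stmt7 (N : ℕ) (hN : 0 < N) (lam : Fin N → ℝ)
    (hlam : ∀ j, lam j ∈ Set.Ioc (0 : ℝ) 1) :
    (⌊∑ j, lam j ^ 2⌋ : ℝ) + Real.sqrt ((∑ j, lam j ^ 2) - ⌊∑ j, lam j ^ 2⌋) ≤
      ∑ j, lam j := by
  set P := ∑ j, lam j ^ 2 with hP
  set S := ∑ j, lam j with hS
  -- smoothing bound over any finset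
  have key : ∀ s : Finset (Fin N),
      ∑ j ∈ s, lam j ^ 2 ≤ (⌊∑ j ∈ s, lam j⌋ : ℝ) + ((∑ j ∈ s, lam j) - ⌊∑ j ∈ s, lam j⌋) ^ 2 := by
    intro s
    induction s using Finset.cons_induction with
    | empty => simp
    | cons a s ha ih =>
      rw [Finset.sum_cons, Finset.sum_cons]
      have h := gstep (∑ j ∈ s, lam j) (lam a) (le_of_lt (hlam a).1) (hlam a).2
      have : lam a + ∑ j ∈ s, lam j = ∑ j ∈ s, lam j + lam a := by ring
      rw [this]
      linarith
  have hkey : P ≤ (⌊S⌋ : ℝ) + (S - ⌊S⌋) ^ 2 := key Finset.univ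
  have hPS : P ≤ S := by
    apply Finset.sum_le_sum
    intro j _
    nlinarith [(hlam j).1, (hlam j).2]
  have hfl : (⌊P⌋ : ℝ) ≤ P := Int.floor_le P
  have hfrac1 : P - ⌊P⌋ < 1 := by
    have := Int.lt_floor_add_one P; push_cast at this ⊢; linarith
  have hfrac0 : 0 ≤ P - ⌊P⌋ := by linarith
  by_cases hcase : S < (⌊P⌋ : ℝ) + 1
  · -- then ⌊S⌋ = ⌊P⌋
    have h1 : ⌊P⌋ ≤ ⌊S⌋ := Int.floor_le_floor hPS
    have h2 : ⌊S⌋ ≤ ⌊P⌋ := by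
      by_contra h
      push_neg at h
      have : (⌊P⌋ : ℝ) + 1 ≤ ⌊S⌋ := by exact_mod_cast h
      have := Int.floor_le S
      linarith
    have hSfl : ⌊S⌋ = ⌊P⌋ := le_antisymm h2 h1
    rw [hSfl] at hkey
    have hle : P - ⌊P⌋ ≤ (S - ⌊P⌋) ^ 2 := by linarith
    have hsq : Real.sqrt (P - ⌊P⌋) ≤ S - ⌊P⌋ := by
      have hnn : 0 ≤ S - (⌊P⌋ : ℝ) := by linarith
      calc Real.sqrt (P - ⌊P⌋) ≤ Real.sqrt ((S - ⌊P⌋)^2) := Real.sqrt_le_sqrt hle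
        _ = S - ⌊P⌋ := Real.sqrt_sq hnn
    linarith
  · push_neg at hcase
    have : Real.sqrt (P - ⌊P⌋) < 1 := by
      rw [show (1:ℝ) = Real.sqrt 1 by simp]
      exact Real.sqrt_lt_sqrt hfrac0 (by linarith)
    linarith
end

section
/- Fix a real number a₀ ∈ [−π, π] and an integer d ≥ 2. Among all tuples (a₁,…,a_{d−1}) of real numbers satisfying sin a₀ + Σ_{k=1}^{d−1} sin a_k = 0, the maximum of cos a₀ + Σ_{k=1}^{d−1} cos a_k equals b_max(a₀) := cos a₀ + (d−1)·sqrt(1 − sin²(a₀)/(d−1)²). Moreover, b_max is a monotonically decreasing function of |a₀| on [0, π]. -/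
lemma gmono_aux (c : ℝ) (hc : 0 ≤ c) {u v : ℝ} (h : u ≤ v) :
    u + Real.sqrt (c + u ^ 2) ≤ v + Real.sqrt (c + v ^ 2) := by
  set p := Real.sqrt (c + u ^ 2) with hpdef
  set q := Real.sqrt (c + v ^ 2) with hqdef
  have hp0 : 0 ≤ p := Real.sqrt_nonneg _
  have hq0 : 0 ≤ q := Real.sqrt_nonneg _
  have hp2 : p ^ 2 = c + u ^ 2 := Real.sq_sqrt (by positivity)
  have hq2 : q ^ 2 = c + v ^ 2 := Real.sq_sqrt (by positivity)
  have hpu : -u ≤ p := by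
    have : Real.sqrt (u ^ 2) ≤ p := Real.sqrt_le_sqrt (by linarith)
    rw [Real.sqrt_sq_eq_abs] at this
    linarith [neg_abs_le u]
  have hqv : -v ≤ q := by
    have : Real.sqrt (v ^ 2) ≤ q := Real.sqrt_le_sqrt (by linarith)
    rw [Real.sqrt_sq_eq_abs] at this
    linarith [neg_abs_le v]
  nlinarith [mul_nonneg (sub_nonneg.2 h) (by linarith : (0:ℝ) ≤ p + q + u + v), sq_nonneg (p - q), sq_nonneg (p + q)]

/-- With `sin a₀ + Σ sin a_k = 0` as constraint, the maximum of `cos a₀ + Σ cos a_k`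
equals `b_max(a₀) = cos a₀ + √((d−1)² − sin² a₀)`, and `b_max` is monotonically
decreasing in `|a₀|` on `[0, π]`. -/
theorem stmt8 (d : ℕ) (hd : 2 ≤ d) (a₀ : ℝ) (ha₀ : a₀ ∈ Set.Icc (-Real.pi) Real.pi) :
    IsGreatest {s : ℝ | ∃ a : Fin (d - 1) → ℝ,
        Real.sin a₀ + ∑ k, Real.sin (a k) = 0 ∧ s = Real.cos a₀ + ∑ k, Real.cos (a k)}
      (Real.cos a₀ + Real.sqrt (((d : ℝ) - 1) ^ 2 - Real.sin a₀ ^ 2)) ∧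
    AntitoneOn (fun t : ℝ => Real.cos t + Real.sqrt (((d : ℝ) - 1) ^ 2 - Real.sin t ^ 2))
      (Set.Icc 0 Real.pi) := by
  have hD : ((d - 1 : ℕ) : ℝ) = (d : ℝ) - 1 := by
    have := Nat.cast_sub (by omega : 1 ≤ d) (R := ℝ)
    simpa using this
  have hd1 : (1 : ℝ) ≤ (d : ℝ) - 1 := by
    have : (2 : ℝ) ≤ (d : ℝ) := by exact_mod_cast hd
    linarith
  have hdpos : (0 : ℝ) < (d : ℝ) - 1 := by linarith
  constructor
  · constructor
    · -- membership
      set x : ℝ := -Real.sin a₀ / ((d : ℝ) - 1) with hx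
      have hx1 : -1 ≤ x := by
        rw [hx, le_div_iff₀ hdpos]
        nlinarith [Real.neg_one_le_sin a₀, Real.sin_le_one a₀]
      have hx2 : x ≤ 1 := by
        rw [hx, div_le_iff₀ hdpos]
        nlinarith [Real.neg_one_le_sin a₀, Real.sin_le_one a₀]
      refine ⟨fun _ => Real.arcsin x, ?_, ?_⟩
      · rw [Finset.sum_const, Real.sin_arcsin hx1 hx2]
        simp only [Finset.card_univ, Fintype.card_fin, nsmul_eq_mul, hD, hx]
        field_simp
        ring
      · rw [Finset.sum_const, Real.cos_arcsin]
        simp only [Finset.card_univ, Fintype.card_fin, nsmul_eq_mul, hD]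
        rw [show ((d:ℝ)-1)^2 - Real.sin a₀ ^ 2 = ((d:ℝ)-1)^2 * (1 - x ^ 2) by
              rw [hx]; field_simp,
            Real.sqrt_mul (sq_nonneg _), Real.sqrt_sq hdpos.le]
    · -- upper bound
      rintro s ⟨a, hsum, rfl⟩
      have key : (∑ k, Real.cos (a k)) ^ 2 + (∑ k, Real.sin (a k)) ^ 2 ≤ ((d : ℝ) - 1) ^ 2 := by
        set z : ℂ := ∑ k, Complex.exp ((a k : ℂ) * Complex.I) with hz
        have hre : z.re = ∑ k, Real.cos (a k) := by
          rw [hz, Complex.re_sum]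
          exact Finset.sum_congr rfl fun k _ => Complex.exp_ofReal_mul_I_re (a k)
        have him : z.im = ∑ k, Real.sin (a k) := by
          rw [hz, Complex.im_sum]
          exact Finset.sum_congr rfl fun k _ => Complex.exp_ofReal_mul_I_im (a k)
        have habs : ‖z‖ ≤ (d : ℝ) - 1 := by
          calc ‖z‖ ≤ ∑ k : Fin (d-1), ‖Complex.exp ((a k : ℂ) * Complex.I)‖ :=
                norm_sum_le _ _
            _ = ∑ k : Fin (d-1), 1 := by
                exact Finset.sum_congr rfl fun k _ => Complex.norm_exp_ofReal_mul_I (a k)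
            _ = (d : ℝ) - 1 := by simp [hD]
        have := Complex.sq_norm z
        rw [Complex.normSq_apply] at this
        rw [hre, him] at this
        nlinarith [pow_le_pow_left₀ (norm_nonneg z) habs 2]
      have hS : ∑ k, Real.sin (a k) = -Real.sin a₀ := by linarith
      have hC2 : (∑ k, Real.cos (a k)) ^ 2 ≤ ((d : ℝ) - 1) ^ 2 - Real.sin a₀ ^ 2 := by
        rw [hS] at key; nlinarith
      have : (∑ k, Real.cos (a k)) ≤ Real.sqrt (((d : ℝ) - 1) ^ 2 - Real.sin a₀ ^ 2) := by
        rcases le_or_gt (∑ k, Real.cos (a k)) 0 with h | h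
        · exact h.trans (Real.sqrt_nonneg _)
        · exact (Real.le_sqrt h.le (le_trans (sq_nonneg _) hC2)).2 hC2
      linarith
  · -- antitone
    intro x hx y hy hxy
    simp only
    have hs : ∀ t : ℝ, ((d:ℝ)-1)^2 - Real.sin t ^ 2 = (((d:ℝ)-1)^2 - 1) + Real.cos t ^ 2 := by
      intro t; have := Real.sin_sq_add_cos_sq t; linarith
    rw [hs x, hs y]
    have hcos : Real.cos y ≤ Real.cos x :=
      Real.cos_le_cos_of_nonneg_of_le_pi hx.1 hy.2 hxy
    exact gmono_aux _ (by nlinarith) hcos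
end

section
/- Let U₁, U₂ be unitary operators on a finite-dimensional Hilbert space such that W := U₁† U₂ has spectrum contained in {e^{ia} : a ∈ [−π/2, π/2]}. If the commutator [U₁†, U₂] is Hermitian, then [U₁†, U₂] = 0. -/
open Complex
open scoped ComplexOrder

set_option synthInstance.maxHeartbeats 1000000 in
set_option maxHeartbeats 1000000 in
lemma key_clm {H : Type*} [NormedAddCommGroup H] [InnerProductSpace ℂ H] [FiniteDimensional ℂ H]
    (W V : H →L[ℂ] H)
    (hW1 : star W * W = 1) (hW2 : W * star W = 1)
    (hV1 : star V * V = 1) (hV2 : V * star V = 1)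
    (hsp : spectrum ℂ V = spectrum ℂ W)
    (harc : spectrum ℂ W ⊆ {z : ℂ | ∃ a : ℝ, a ∈ Set.Icc (-(Real.pi / 2)) (Real.pi / 2) ∧
        z = Complex.exp (a * Complex.I)})
    (him : W - star W = V - star V) : W = V := by
  have hWn : IsStarNormal W := ⟨by rw [Commute, SemiconjBy, hW1, hW2]⟩
  have hVn : IsStarNormal V := ⟨by rw [Commute, SemiconjBy, hV1, hV2]⟩
  have key : ∀ (U : H →L[ℂ] H), IsStarNormal U →
      (spectrum ℂ U ⊆ {z : ℂ | ∃ a : ℝ, a ∈ Set.Icc (-(Real.pi / 2)) (Real.pi / 2) ∧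
        z = Complex.exp (a * Complex.I)}) → 0 ≤ U + star U := by
    intro U hU hUspec
    have h1 : U + star U = cfc (fun z : ℂ => z + star z) U := by
      rw [cfc_add U (fun z => z) (fun z => star z), cfc_id' ℂ U, cfc_star_id (R := ℂ) (a := U)]
    rw [h1]
    apply cfc_nonneg
    intro z hz
    obtain ⟨a, ha, rfl⟩ := hUspec hz
    have he : Complex.exp (a * Complex.I) + star (Complex.exp (a * Complex.I)) =
        ((2 * Real.cos a : ℝ) : ℂ) := by
      rw [show (star (Complex.exp (a * Complex.I)) : ℂ) =
        (starRingEnd ℂ) (Complex.exp (a * Complex.I)) from rfl, Complex.add_conj,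
        Complex.exp_ofReal_mul_I_re]
    rw [he]
    have := Real.cos_nonneg_of_mem_Icc ha
    have h2 : (0:ℝ) ≤ 2 * Real.cos a := by positivity
    exact_mod_cast Complex.zero_le_real.mpr h2
  have hPW : 0 ≤ W + star W := key W hWn harc
  have hPV : 0 ≤ V + star V := key V hVn (hsp ▸ harc)
  have hsq : (W + star W) * (W + star W) = (V + star V) * (V + star V) := by
    have e1 : (W + star W) * (W + star W) - (W - star W) * (W - star W)
        = 2 * (W * star W) + 2 * (star W * W) := by noncomm_ring
    have e2 : (V + star V) * (V + star V) - (V - star V) * (V - star V)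
        = 2 * (V * star V) + 2 * (star V * V) := by noncomm_ring
    rw [hW1, hW2] at e1
    rw [hV1, hV2] at e2
    have h3 := e1.trans e2.symm
    rw [him] at h3
    linear_combination (norm := noncomm_ring) h3
  have hP : W + star W = V + star V := by
    calc W + star W = CFC.sqrt ((W + star W) * (W + star W)) :=
          (CFC.sqrt_mul_self _ hPW).symm
      _ = CFC.sqrt ((V + star V) * (V + star V)) := by rw [hsq]
      _ = V + star V := CFC.sqrt_mul_self _ hPV
  have hA : W - V = star W - star V := sub_eq_sub_iff_sub_eq_sub.mp him
  have hB : W - V = star V - star W := sub_eq_sub_iff_add_eq_add.mpr (by rw [hP]; abel)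
  have hz : (2 : ℂ) • (W - V) = 0 := by
    rw [two_smul]
    nth_rewrite 1 [hA]
    rw [hB]; abel
  have := (smul_eq_zero.mp hz).resolve_left (by norm_num)
  exact sub_eq_zero.mp this

/-- If `W = U₁† U₂` has spectrum in the arc `{e^{ia} : a ∈ [−π/2, π/2]}` and the
commutator `[U₁†, U₂]` is Hermitian, then the commutator vanishes. -/
theorem stmt10 {H : Type*} [NormedAddCommGroup H] [InnerProductSpace ℂ H]
    [FiniteDimensional ℂ H]
    (U₁ U₂ : H →ₗ[ℂ] H)
    (h₁ : ∀ x y : H, (inner ℂ (U₁ x) (U₁ y) : ℂ) = inner ℂ x y)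
    (h₂ : ∀ x y : H, (inner ℂ (U₂ x) (U₂ y) : ℂ) = inner ℂ x y)
    (hspec : spectrum ℂ (LinearMap.adjoint U₁ ∘ₗ U₂) ⊆
      {z : ℂ | ∃ a : ℝ, a ∈ Set.Icc (-(Real.pi / 2)) (Real.pi / 2) ∧
        z = Complex.exp (a * Complex.I)})
    (hherm : (LinearMap.adjoint U₁ ∘ₗ U₂ - U₂ ∘ₗ LinearMap.adjoint U₁).IsSymmetric) :
    LinearMap.adjoint U₁ ∘ₗ U₂ - U₂ ∘ₗ LinearMap.adjoint U₁ = 0 := by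
  classical
  set W : H →ₗ[ℂ] H := LinearMap.adjoint U₁ ∘ₗ U₂ with hWdef
  set V : H →ₗ[ℂ] H := U₂ ∘ₗ LinearMap.adjoint U₁ with hVdef
  -- unitarity of U₁, U₂
  have hU1 : LinearMap.adjoint U₁ ∘ₗ U₁ = 1 := by
    ext x
    apply ext_inner_right ℂ
    intro y
    simp [LinearMap.adjoint_inner_left, h₁]
  have hU2 : LinearMap.adjoint U₂ ∘ₗ U₂ = 1 := by
    ext x
    apply ext_inner_right ℂ
    intro y
    simp [LinearMap.adjoint_inner_left, h₂]
  have hU1' : U₁ ∘ₗ LinearMap.adjoint U₁ = 1 :=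
    mul_eq_one_comm.mp hU1
  have hU2' : U₂ ∘ₗ LinearMap.adjoint U₂ = 1 :=
    mul_eq_one_comm.mp hU2
  -- the algebra equivalence with continuous linear maps
  let e : (H →ₗ[ℂ] H) ≃ₐ[ℂ] (H →L[ℂ] H) :=
    AlgEquiv.ofLinearEquiv LinearMap.toContinuousLinearMap
      (by ext x; rfl) (fun f g => by ext x; rfl)
  have estar : ∀ f : H →ₗ[ℂ] H, star (e f) = e (LinearMap.adjoint f) := by
    intro f
    rw [ContinuousLinearMap.star_eq_adjoint]
    exact (LinearMap.adjoint_toContinuousLinearMap f).symm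
  -- adjoints of W and V
  have hWadj : LinearMap.adjoint W = LinearMap.adjoint U₂ ∘ₗ U₁ := by
    rw [hWdef, LinearMap.adjoint_comp, LinearMap.adjoint_adjoint]
  have hVadj : LinearMap.adjoint V = U₁ ∘ₗ LinearMap.adjoint U₂ := by
    rw [hVdef, LinearMap.adjoint_comp, LinearMap.adjoint_adjoint]
  have assoc : ∀ a b c : H →ₗ[ℂ] H, (a ∘ₗ b) ∘ₗ c = a ∘ₗ (b ∘ₗ c) := fun a b c =>
    (LinearMap.comp_assoc c b a).symm
  have hW1 : LinearMap.adjoint W ∘ₗ W = 1 := by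
    rw [hWadj, hWdef, assoc, ← assoc U₁, hU1']; exact hU2
  have hW2 : W ∘ₗ LinearMap.adjoint W = 1 := mul_eq_one_comm.mp hW1
  have hV1 : LinearMap.adjoint V ∘ₗ V = 1 := by
    rw [hVadj, hVdef, assoc, ← assoc (LinearMap.adjoint U₂), hU2]; exact hU1'
  have hV2 : V ∘ₗ LinearMap.adjoint V = 1 := mul_eq_one_comm.mp hV1
  -- spectra agree via conjugation by the unit U₂
  have hspLM : spectrum ℂ V = spectrum ℂ W := by
    let u : (H →ₗ[ℂ] H)ˣ := ⟨U₂, LinearMap.adjoint U₂, hU2', hU2⟩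
    have hconj : V = (u : H →ₗ[ℂ] H) * W * ((u⁻¹ : (H →ₗ[ℂ] H)ˣ) : H →ₗ[ℂ] H) := by
      show V = U₂ * W * LinearMap.adjoint U₂
      show V = (U₂ ∘ₗ W) ∘ₗ LinearMap.adjoint U₂
      rw [hWdef, hVdef, ← assoc U₂, assoc, hU2']
      exact (LinearMap.comp_id _).symm
    rw [hconj]
    exact spectrum.units_conjugate
  -- the Hermiticity condition
  have hS : W - V = LinearMap.adjoint W - LinearMap.adjoint V := by
    have h := (LinearMap.eq_adjoint_iff (W - V) (W - V)).mpr hherm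
    rw [map_sub] at h
    exact h
  -- transfer to continuous linear maps
  have key := key_clm (e W) (e V)
    (by rw [estar, ← map_mul, ← map_one e]; exact congrArg e hW1)
    (by rw [estar, ← map_mul, ← map_one e]; exact congrArg e hW2)
    (by rw [estar, ← map_mul, ← map_one e]; exact congrArg e hV1)
    (by rw [estar, ← map_mul, ← map_one e]; exact congrArg e hV2)
    (by rw [AlgEquiv.spectrum_eq, AlgEquiv.spectrum_eq]; exact hspLM)
    (by rw [AlgEquiv.spectrum_eq]; exact hspec)
    (by
      rw [estar, estar, ← map_sub, ← map_sub]
      exact congrArg e (sub_eq_sub_iff_sub_eq_sub.mpr hS).symm ▸ rfl)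
  have : W = V := e.injective key
  rw [this, sub_self]
end

section
/- Let U_H be a unitary on a d-dimensional Hilbert space with orthonormal eigenbasis (|E_n⟩)_{n=0}^{d-1} and eigenvalues e^{-iE_n t₀}. For a permutation q of {0,…,d−1} and phases φ_n, define the DFT basis |C_k⟩ = d^{-1/2} Σ_n e^{-2πink/d} e^{-iφ_n} |E_{q(n)}⟩. Then (|C_k⟩)_{k=0}^{d-1} is an orthonormal basis, and for all k and p (indices mod d), |⟨C_{k+p}| U_H^p |C_k⟩| = |(1/d) Σ_{n=0}^{d-1} exp(ip(2πn/d − E_{q(n)} t₀))|; in particular this quantity is independent of k. -/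
open Complex Finset

private lemma expsum12 (d : ℕ) [NeZero d] (m : ℤ) :
    ∑ n : Fin d, Complex.exp (2 * Real.pi * m * n / d * Complex.I) =
      if (d : ℤ) ∣ m then (d : ℂ) else 0 := by
  have hd : (d : ℂ) ≠ 0 := Nat.cast_ne_zero.mpr (NeZero.ne d)
  set ζ : ℂ := Complex.exp (2 * Real.pi * Complex.I * m / d) with hζ
  have hterm : ∀ n : Fin d,
      Complex.exp (2 * Real.pi * m * n / d * Complex.I) = ζ ^ (n : ℕ) := by
    intro n
    rw [hζ, ← Complex.exp_nat_mul]
    congr 1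
    field_simp
  have hζd : ζ ^ d = 1 := by
    rw [hζ, ← Complex.exp_nat_mul]
    have : (d : ℂ) * (2 * Real.pi * Complex.I * m / d) = m * (2 * Real.pi * Complex.I) := by
      field_simp
    rw [this, Complex.exp_int_mul_two_pi_mul_I]
  have hprim := Complex.isPrimitiveRoot_exp d (NeZero.ne d)
  have hζpow : ζ = Complex.exp (2 * Real.pi * Complex.I / d) ^ m := by
    rw [← Complex.exp_int_mul, hζ]
    congr 1; ring
  have hζ1 : ζ = 1 ↔ (d : ℤ) ∣ m := by
    rw [hζpow]
    exact hprim.zpow_eq_one_iff_dvd m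
  simp_rw [hterm]
  by_cases h : (d : ℤ) ∣ m
  · rw [if_pos h]
    have : ζ = 1 := hζ1.mpr h
    simp [this]
  · rw [if_neg h]
    have hne : ζ ≠ 1 := fun hh => h (hζ1.mp hh)
    rw [Fin.sum_univ_eq_sum_range (fun n => ζ ^ n) d, geom_sum_eq hne, hζd]
    simp

private lemma exp2aux (s u v : ℂ) :
    (s * Complex.exp u) * (s * Complex.exp v) = s * s * Complex.exp (u + v) := by
  rw [Complex.exp_add]; ring

private lemma exp3aux (s u v w : ℂ) :
    (s * Complex.exp u) * ((s * Complex.exp v) * Complex.exp w) =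
      s * s * Complex.exp (u + v + w) := by
  rw [Complex.exp_add, Complex.exp_add]; ring

/-- The DFT of an eigenbasis of `U_H` is an orthonormal (cyclic permutation) basis, and its
persistence amplitudes are given by the level-statistics expression, independent of `k`. -/
theorem stmt12 {H : Type*} [NormedAddCommGroup H] [InnerProductSpace ℂ H]
    (d : ℕ) [NeZero d] (E : OrthonormalBasis (Fin d) ℂ H)
    (U : H →ₗ[ℂ] H) (θ : Fin d → ℝ)
    (hU : ∀ n, U (E n) = Complex.exp (-(θ n : ℂ) * Complex.I) • E n)
    (q : Equiv.Perm (Fin d)) (φ : Fin d → ℝ)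
    (C : ZMod d → H)
    (hC : ∀ k : ZMod d, C k = (Real.sqrt d : ℂ)⁻¹ •
      ∑ n : Fin d,
        (Complex.exp (-((2 * Real.pi * (n : ℕ) * k.val / d : ℝ) : ℂ) * Complex.I) *
          Complex.exp (-(φ n : ℂ) * Complex.I)) • E (q n)) :
    Orthonormal ℂ C ∧
    ∀ (k : ZMod d) (p : ℕ),
      ‖(inner ℂ (C (k + p)) ((U ^ p) (C k)) : ℂ)‖ =
        ‖(1 / d : ℂ) * ∑ n : Fin d,
          Complex.exp ((((p : ℝ) * (2 * Real.pi * (n : ℕ) / d - θ (q n)) : ℝ) : ℂ) *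
            Complex.I)‖ := by
  classical
  have hdR : (d : ℝ) ≠ 0 := Nat.cast_ne_zero.mpr (NeZero.ne d)
  have hdC : (d : ℂ) ≠ 0 := Nat.cast_ne_zero.mpr (NeZero.ne d)
  set s : ℂ := ((Real.sqrt d : ℝ) : ℂ)⁻¹ with hs_def
  have hs : s * s = (d : ℂ)⁻¹ := by
    rw [hs_def, ← mul_inv, ← Complex.ofReal_mul, Real.mul_self_sqrt d.cast_nonneg]
    push_cast
    ring_nf
  set c : ZMod d → Fin d → ℂ := fun k n =>
    s * Complex.exp (-((2 * Real.pi * (n : ℕ) * k.val / d + φ n : ℝ) : ℂ) * Complex.I)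
    with hc_def
  have hC' : ∀ k, C k = ∑ n : Fin d, c k n • E (q n) := by
    intro k
    rw [hC k, Finset.smul_sum]
    refine Finset.sum_congr rfl fun n _ => ?_
    rw [smul_smul, ← Complex.exp_add]
    congr 2
    push_cast
    ring
  have hconj : ∀ (j : ZMod d) (n : Fin d), (starRingEnd ℂ) (c j n) =
      s * Complex.exp (((2 * Real.pi * (n : ℕ) * j.val / d + φ n : ℝ) : ℂ) * Complex.I) := by
    intro j n
    simp only [hc_def, map_mul, hs_def, map_inv₀, Complex.conj_ofReal, ← Complex.exp_conj,
      map_neg, Complex.conj_I, neg_mul_neg]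
  have hEq : Orthonormal ℂ (fun n => E (q n)) := E.orthonormal.comp q q.injective
  have hinner : ∀ j k : ZMod d, (inner ℂ (C j) (C k) : ℂ) =
      (d : ℂ)⁻¹ * ∑ n : Fin d,
        Complex.exp (2 * Real.pi * (((j.val : ℤ) - (k.val : ℤ) : ℤ) : ℂ) * n / d * Complex.I) := by
    intro j k
    rw [hC' j, hC' k, hEq.inner_sum, Finset.mul_sum]
    refine Finset.sum_congr rfl fun n _ => ?_
    rw [hconj, hc_def]
    rw [exp2aux, hs]
    congr 2
    push_cast
    field_simp
    ring
  constructor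
  · rw [orthonormal_iff_ite]
    intro j k
    rw [hinner j k, expsum12 d _]
    by_cases h : j = k
    · subst h
      simp [inv_mul_cancel₀ hdC]
    · have hnd : ¬ (d : ℤ) ∣ ((j.val : ℤ) - (k.val : ℤ)) := by
        intro hdvd
        apply h
        have h2 : ((((j.val : ℤ) - (k.val : ℤ)) : ℤ) : ZMod d) = 0 :=
          (ZMod.intCast_zmod_eq_zero_iff_dvd _ d).mpr hdvd
        push_cast at h2
        simpa [ZMod.natCast_val, ZMod.cast_id, sub_eq_zero] using h2
      rw [if_neg hnd, if_neg h, mul_zero]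
  · intro k p
    have hUp : ∀ (p : ℕ) (m : Fin d),
        (U ^ p) (E m) = Complex.exp (-(θ m : ℂ) * Complex.I) ^ p • E m := by
      intro p m
      induction p with
      | zero => simp
      | succ p ih =>
        rw [pow_succ U, Module.End.mul_apply, hU, map_smul, ih, smul_smul, ← pow_succ']
    have hUC : (U ^ p) (C k) = ∑ n : Fin d,
        (c k n * Complex.exp (-(θ (q n) : ℂ) * Complex.I) ^ p) • E (q n) := by
      rw [hC' k, map_sum]
      simp_rw [map_smul, hUp, smul_smul]
    obtain ⟨a, ha⟩ : ∃ a : ℤ,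
        (((k + (p : ZMod d)).val : ℤ)) = (k.val : ℤ) + p + d * a := by
      have h2 : ((((k + (p : ZMod d)).val : ℤ) - ((k.val : ℤ) + p) : ℤ) : ZMod d) = 0 := by
        push_cast
        simp [ZMod.natCast_val, ZMod.cast_id]
      obtain ⟨a, ha⟩ := (ZMod.intCast_zmod_eq_zero_iff_dvd _ d).mp h2
      exact ⟨a, by linarith⟩
    have haR : (((k + (p : ZMod d)).val : ℝ)) = (k.val : ℝ) + p + d * a := by
      exact_mod_cast ha
    rw [hC' (k + (p : ZMod d)), hUC, hEq.inner_sum]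
    congr 1
    rw [one_div, Finset.mul_sum]
    refine Finset.sum_congr rfl fun n _ => ?_
    rw [hconj, hc_def, ← Complex.exp_nat_mul, exp3aux, hs]
    congr 1
    rw [Complex.exp_eq_exp_iff_exists_int]
    refine ⟨(n : ℕ) * a, ?_⟩
    push_cast [haR]
    field_simp
    ring
end

section
/- Let U_C cycle an orthonormal basis (|C_k⟩)_{k∈Z_d} of a d-dimensional Hilbert space and let U_H be a unitary with [U_H, U_C] = 0. Writing U_Δ = U_C† U_H = e^{iφ}(√(1−ε) 𝟙 + √ε Σ_{m=1}^{d−1} ν_m U_C^m) with ε ∈ [0,1) and Σ_m |ν_m|² = 1, the normalized spectral form factor of U_H at step p satisfies K(p) := |(1/d)Tr(U_H^p)|² = ε_p |ν_{−p}(p)|² ≤ ε_p, where ε_p and ν_m(p) are the analogous coefficients for U_Δ^p (so that U_H^p = U_C^p U_Δ^p). In particular K(p) ≤ ε_p = 1 − z(p)² for all p. -/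
set_option linter.unusedSectionVars false

section Aux
variable {H : Type*} [NormedAddCommGroup H] [InnerProductSpace ℂ H] [FiniteDimensional ℂ H]

lemma aux_pow_apply (d : ℕ) [NeZero d] (C : OrthonormalBasis (ZMod d) ℂ H)
    (UC : H ≃ₗᵢ[ℂ] H) (hUC : ∀ k, UC (C k) = C (k + 1)) (j : ℕ) (k : ZMod d) :
    (UC ^ j) (C k) = C (k + j) := by
  induction j with
  | zero => simp
  | succ n ih =>
    rw [pow_succ']
    have : (UC * UC ^ n) (C k) = UC ((UC ^ n) (C k)) := rfl
    rw [this, ih, hUC]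
    push_cast
    ring_nf

lemma aux_trace (d : ℕ) [NeZero d] (C : OrthonormalBasis (ZMod d) ℂ H)
    (UC : H ≃ₗᵢ[ℂ] H) (hUC : ∀ k, UC (C k) = C (k + 1)) (j : ℕ) :
    LinearMap.trace ℂ H ((UC ^ j).toLinearEquiv.toLinearMap)
      = if (j : ZMod d) = 0 then (d : ℂ) else 0 := by
  rw [LinearMap.trace_eq_matrix_trace ℂ C.toBasis]
  rw [Matrix.trace]
  have : ∀ k : ZMod d, (LinearMap.toMatrix C.toBasis C.toBasis
      ((UC ^ j).toLinearEquiv.toLinearMap)).diag k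
      = if (j : ZMod d) = 0 then 1 else 0 := by
    intro k
    rw [Matrix.diag, LinearMap.toMatrix_apply]
    simp only [OrthonormalBasis.coe_toBasis, OrthonormalBasis.coe_toBasis_repr_apply,
      OrthonormalBasis.repr_apply_apply]
    simp only [LinearEquiv.coe_coe, LinearIsometryEquiv.coe_toLinearEquiv,
      aux_pow_apply d C UC hUC j k]
    rw [orthonormal_iff_ite.mp C.orthonormal]
    congr 1
    simp [eq_comm, left_eq_add]
  simp only [this]
  rw [Finset.sum_ite_irrel]
  simp [ZMod.card]
end Aux

/-- The spectral form factor is bounded by the error: with the periodic/random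
decomposition of `U_Δ^p`, one has `K(p) = ε_p |ν_{−p}(p)|² ≤ ε_p = 1 − z(p)²`. -/
theorem stmt19 {H : Type*} [NormedAddCommGroup H] [InnerProductSpace ℂ H]
    [FiniteDimensional ℂ H]
    (d : ℕ) [NeZero d] (C : OrthonormalBasis (ZMod d) ℂ H)
    (UH UC : H ≃ₗᵢ[ℂ] H)
    (hUC : ∀ k, UC (C k) = C (k + 1))
    (hcomm : UH * UC = UC * UH)
    (UΔ : H ≃ₗᵢ[ℂ] H) (hUΔ : UΔ = UC⁻¹ * UH)
    (p : ℕ) (hp : (p : ZMod d) ≠ 0)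
    (εp : ℝ) (hεp : εp ∈ Set.Ico (0 : ℝ) 1)
    (ν : ZMod d → ℂ) (hν0 : ν 0 = 0)
    (hνnorm : ∑ m : ZMod d, ‖ν m‖ ^ 2 = 1)
    (φ : ℝ)
    (hdecomp : ((UΔ ^ p).toLinearEquiv.toLinearMap : H →ₗ[ℂ] H) =
      Complex.exp ((φ : ℂ) * Complex.I) •
        (((Real.sqrt (1 - εp) : ℝ) : ℂ) • (LinearMap.id : H →ₗ[ℂ] H) +
          ((Real.sqrt εp : ℝ) : ℂ) •
            ∑ m : ZMod d, ν m • (UC ^ m.val).toLinearEquiv.toLinearMap)) :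
    ‖(d : ℂ)⁻¹ * LinearMap.trace ℂ H ((UH ^ p).toLinearEquiv.toLinearMap)‖ ^ 2 =
        εp * ‖ν (-(p : ZMod d))‖ ^ 2 ∧
    ‖(d : ℂ)⁻¹ * LinearMap.trace ℂ H ((UH ^ p).toLinearEquiv.toLinearMap)‖ ^ 2 ≤ εp ∧
    ‖(d : ℂ)⁻¹ * LinearMap.trace ℂ H ((UΔ ^ p).toLinearEquiv.toLinearMap)‖ ^ 2 = 1 - εp := by
  have hd0 : (d : ℝ) ≠ 0 := Nat.cast_ne_zero.mpr (NeZero.ne d)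
  have hε0 : (0:ℝ) ≤ εp := hεp.1
  have hε1 : εp ≤ 1 := le_of_lt hεp.2
  have htr := aux_trace d C UC hUC
  -- trace of id
  have hfinrank : Module.finrank ℂ H = d := by
    rw [Module.finrank_eq_card_basis C.toBasis, ZMod.card]
  have htrid : LinearMap.trace ℂ H (LinearMap.id : H →ₗ[ℂ] H) = (d : ℂ) := by
    rw [LinearMap.trace_id, hfinrank]
  -- val cast
  have hvalcast : ∀ m : ZMod d, ((m.val : ℕ) : ZMod d) = m := fun m => by
    simp [ZMod.natCast_val, ZMod.cast_id]
  -- trace of UΔ^p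
  have htrΔ : LinearMap.trace ℂ H ((UΔ ^ p).toLinearEquiv.toLinearMap)
      = Complex.exp ((φ : ℂ) * Complex.I) * ((Real.sqrt (1 - εp) : ℝ) : ℂ) * d := by
    rw [hdecomp]
    rw [map_smul, map_add, map_smul, map_smul, map_sum, htrid]
    simp only [map_smul, htr]
    have : ∀ m : ZMod d, ν m • (if ((m.val : ℕ) : ZMod d) = 0 then (d:ℂ) else 0)
        = if m = 0 then ν m * d else 0 := by
      intro m
      rw [hvalcast m]
      split <;> simp
    simp only [this, Finset.sum_ite_eq' Finset.univ (0 : ZMod d) (fun m => ν m * d)]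
    simp [hν0]
    ring
  -- UH^p = UC^p * UΔ^p
  have hUCΔ : UC * UΔ = UH := by rw [hUΔ]; group
  have hcommΔ : Commute UC UΔ := by
    rw [hUΔ]
    have h1 : Commute UC UH := hcomm.symm
    exact (Commute.refl UC).inv_right.mul_right h1
  have hUHp : UH ^ p = UC ^ p * UΔ ^ p := by rw [← hUCΔ, hcommΔ.mul_pow]
  have hcompLM : ∀ (X Y : H ≃ₗᵢ[ℂ] H), ((X * Y).toLinearEquiv.toLinearMap : H →ₗ[ℂ] H)
      = X.toLinearEquiv.toLinearMap ∘ₗ Y.toLinearEquiv.toLinearMap := fun X Y => rfl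
  -- expand UH^p
  have hexpand : ((UH ^ p).toLinearEquiv.toLinearMap : H →ₗ[ℂ] H)
      = Complex.exp ((φ : ℂ) * Complex.I) •
        (((Real.sqrt (1 - εp) : ℝ) : ℂ) • (UC ^ p).toLinearEquiv.toLinearMap +
          ((Real.sqrt εp : ℝ) : ℂ) •
            ∑ m : ZMod d, ν m • (UC ^ (p + m.val)).toLinearEquiv.toLinearMap) := by
    have hsmulR : ∀ (c : ℝ) (y : H), (UC ^ p) (c • y) = c • (UC ^ p) y := by
      intro c y; rw [← Complex.coe_smul, ← Complex.coe_smul, map_smul]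
    rw [hUHp, hcompLM, hdecomp]
    ext x
    simp [pow_add, Finset.mul_sum, mul_add, map_smul, map_sum, hsmulR,
      LinearIsometryEquiv.map_smul]
  have htrH : LinearMap.trace ℂ H ((UH ^ p).toLinearEquiv.toLinearMap)
      = Complex.exp ((φ : ℂ) * Complex.I) * ((Real.sqrt εp : ℝ) : ℂ) * (ν (-(p : ZMod d)) * d) := by
    rw [hexpand]
    rw [map_smul, map_add, map_smul, map_smul, map_sum]
    simp only [map_smul, htr]
    rw [if_neg hp]
    have : ∀ m : ZMod d, ν m • (if (((p + m.val : ℕ)) : ZMod d) = 0 then (d:ℂ) else 0)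
        = if m = -(p : ZMod d) then ν m * d else 0 := by
      intro m
      have : (((p + m.val : ℕ)) : ZMod d) = (p : ZMod d) + m := by push_cast [hvalcast m]; ring
      rw [this]
      have heq : ((p : ZMod d) + m = 0) ↔ (m = -(p : ZMod d)) := by
        constructor <;> intro h <;> linear_combination h
      split <;> split <;> simp_all [heq]
    simp only [this, Finset.sum_ite_eq' Finset.univ (-(p : ZMod d)) (fun m => ν m * d)]
    simp
    ring
  -- norms
  have hnormexp : ‖Complex.exp ((φ : ℂ) * Complex.I)‖ = 1 := by
    simpa using Complex.abs_exp_ofReal_mul_I φ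
  have hKΔ : ‖(d : ℂ)⁻¹ * LinearMap.trace ℂ H ((UΔ ^ p).toLinearEquiv.toLinearMap)‖ ^ 2
      = 1 - εp := by
    rw [htrΔ]
    rw [norm_mul, norm_mul, norm_mul, hnormexp]
    simp only [norm_inv, Complex.norm_natCast, Complex.norm_real, Real.norm_eq_abs,
      abs_of_nonneg (Real.sqrt_nonneg _)]
    have h2 : ((d:ℝ))⁻¹ * (1 * Real.sqrt (1 - εp) * d) = Real.sqrt (1 - εp) := by
      field_simp
    rw [h2, Real.sq_sqrt (by linarith)]
  have hKH : ‖(d : ℂ)⁻¹ * LinearMap.trace ℂ H ((UH ^ p).toLinearEquiv.toLinearMap)‖ ^ 2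
      = εp * ‖ν (-(p : ZMod d))‖ ^ 2 := by
    rw [htrH]
    rw [norm_mul, norm_mul, norm_mul, norm_mul, hnormexp]
    simp only [norm_inv, Complex.norm_natCast, Complex.norm_real, Real.norm_eq_abs,
      abs_of_nonneg (Real.sqrt_nonneg _)]
    have h2 : ((d:ℝ))⁻¹ * (1 * Real.sqrt εp * (‖ν (-(p : ZMod d))‖ * d))
        = Real.sqrt εp * ‖ν (-(p : ZMod d))‖ := by field_simp
    rw [h2, mul_pow, Real.sq_sqrt hε0]
  refine ⟨hKH, ?_, hKΔ⟩
  rw [hKH]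
  have hle : ‖ν (-(p : ZMod d))‖ ^ 2 ≤ 1 := by
    rw [← hνnorm]
    exact Finset.single_le_sum (f := fun m : ZMod d => ‖ν m‖ ^ 2)
      (fun i _ => by positivity) (Finset.mem_univ _)
  calc εp * ‖ν (-(p : ZMod d))‖ ^ 2 ≤ εp * 1 := by
        exact mul_le_mul_of_nonneg_left hle hε0
    _ = εp := mul_one _
end
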